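/- arXiv:2510.17678 — 2 statements merged into one kernel-verified Lean document; each statement's English description precedes it below -/
import Mathlib

section
/- Let β = (β₁, β₂) ∈ ℤ¹⁰ × ℤ¹² = ℤ²² satisfy βᵀ·G₂₂·β = −2 (i.e., β is a root of the K3 lattice II_{3,19}). If β₁ᵀ·G₁₀·β₁ < 0, then β₂ᵀ·G₁₂·β₂ ≥ 0. Consequently, if moreover β₂ᵀ·G₁₂·β₂ ≤ 0, then β₁ᵀ·G₁₀·β₁ = −2 and β₂ᵀ·G₁₂·β₂ = 0. (This is the key step showing that, for the unimodular lattice Λ = U ⊕ E₈ primitively embedded in the K3 lattice, the walls of the small cones in Λ_ℝ are exactly the walls of the Weyl chambers of Λ.) -/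
/-! The form of `G₂₂` is the orthogonal sum of those of `G₁₀` and `G₁₂`, so `β₁² + β₂² = -2`.
Since `U ⊕ E₈` is an even lattice, `β₁² < 0` forces `β₁² ≤ -2`, hence `β₂² = -2 - β₁² ≥ 0`,
with equality exactly when `β₁² = -2`. -/

open Matrix

/-- The hyperbolic plane `U`. -/
def Umat : Matrix (Fin 2) (Fin 2) ℤ := !![0, 1; 1, 0]

/-- The negative definite `E₈` Gram matrix: the negative of the Cartan matrix of `E₈`
(chain `0–1–2–3–4–5–6` with node `7` attached to node `2`). -/
def E8neg : Matrix (Fin 8) (Fin 8) ℤ :=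
  !![-2,  1,  0,  0,  0,  0,  0,  0;
      1, -2,  1,  0,  0,  0,  0,  0;
      0,  1, -2,  1,  0,  0,  0,  1;
      0,  0,  1, -2,  1,  0,  0,  0;
      0,  0,  0,  1, -2,  1,  0,  0;
      0,  0,  0,  0,  1, -2,  1,  0;
      0,  0,  0,  0,  0,  1, -2,  0;
      0,  0,  1,  0,  0,  0,  0, -2]

/-- The Gram matrix `G₁₀ = U ⊕ E₈⁻` of `Λ = U ⊕ E₈`. -/
def G10 : Matrix (Fin 10) (Fin 10) ℤ :=
  Matrix.reindex finSumFinEquiv finSumFinEquiv (Matrix.fromBlocks Umat 0 0 E8neg)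

/-- The Gram matrix `G₁₂ = U² ⊕ E₈⁻` of `Λ^⊥ = U² ⊕ E₈`. -/
def G12 : Matrix (Fin 12) (Fin 12) ℤ :=
  Matrix.reindex finSumFinEquiv finSumFinEquiv (Matrix.fromBlocks Umat 0 0 G10)

/-- The Gram matrix `G₂₂ = G₁₀ ⊕ G₁₂` of the K3 lattice `II_{3,19} ≅ U³ ⊕ E₈²`. -/
def G22 : Matrix (Fin 10 ⊕ Fin 12) (Fin 10 ⊕ Fin 12) ℤ := Matrix.fromBlocks G10 0 0 G12

namespace Matrix

variable {m n R : Type*} [Fintype m] [Fintype n]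

theorem dotProduct_mulVec_add_transpose [CommSemiring R] (L : Matrix n n R) (x : n → R) :
    x ⬝ᵥ (L + Lᵀ) *ᵥ x = 2 * (x ⬝ᵥ L *ᵥ x) := by
  rw [add_mulVec, dotProduct_add, dotProduct_mulVec x Lᵀ, vecMul_transpose,
    dotProduct_comm (L *ᵥ x)]
  ring

theorem IsSymm.even_dotProduct_mulVec {G : Matrix n n ℤ} (hG : G.IsSymm)
    (hdiag : ∀ i, Even (G i i)) (x : n → ℤ) : Even (x ⬝ᵥ G *ᵥ x) := by
  classical
  let _ : LinearOrder n := IsWellOrder.linearOrder WellOrderingRel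
  let L : Matrix n n ℤ := of fun i j => if i = j then G i i / 2 else if i < j then G i j else 0
  have hL : G = L + Lᵀ := by
    ext i j
    rcases lt_trichotomy i j with hij | rfl | hij
    · simp [L, hij, hij.ne, hij.ne', not_lt.mpr hij.le]
    · simpa [L, ← two_mul] using (Int.two_mul_ediv_two_of_even (hdiag i)).symm
    · simp [L, hij, hij.ne, hij.ne', not_lt.mpr hij.le, hG.apply j i]
  exact ⟨x ⬝ᵥ L *ᵥ x, by rw [hL, dotProduct_mulVec_add_transpose, two_mul]⟩

theorem sumElim_dotProduct_fromBlocks_mulVec_sumElim [CommSemiring R] (A : Matrix m m R)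
    (D : Matrix n n R) (x : m → R) (y : n → R) :
    Sum.elim x y ⬝ᵥ fromBlocks A 0 0 D *ᵥ Sum.elim x y = x ⬝ᵥ A *ᵥ x + y ⬝ᵥ D *ᵥ y := by
  simp [fromBlocks_mulVec, sumElim_dotProduct_sumElim]

end Matrix

/-- If `β = (β₁, β₂)` is a root of the K3 lattice (`β² = -2`) and `β₁² < 0` then `β₂² ≥ 0`;
if moreover `β₂² ≤ 0` then `β₁² = -2` and `β₂² = 0`. -/
theorem statement10 (β₁ : Fin 10 → ℤ) (β₂ : Fin 12 → ℤ)
    (hroot : Sum.elim β₁ β₂ ⬝ᵥ G22.mulVec (Sum.elim β₁ β₂) = -2)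
    (h₁ : β₁ ⬝ᵥ G10.mulVec β₁ < 0) :
    0 ≤ β₂ ⬝ᵥ G12.mulVec β₂ ∧
    (β₂ ⬝ᵥ G12.mulVec β₂ ≤ 0 →
      β₁ ⬝ᵥ G10.mulVec β₁ = -2 ∧ β₂ ⬝ᵥ G12.mulVec β₂ = 0) := by
  have hsplit : β₁ ⬝ᵥ G10 *ᵥ β₁ + β₂ ⬝ᵥ G12 *ᵥ β₂ = -2 := by
    rwa [G22, sumElim_dotProduct_fromBlocks_mulVec_sumElim] at hroot
  have hsymm : G10.IsSymm := by decide
  obtain ⟨k, hk⟩ := hsymm.even_dotProduct_mulVec (by decide) β₁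
  omega
end

section
/- Let t ∈ ℂ¹¹, let c ∈ ℂ and set ℓ = x + c·w⁶ ∈ ℂ[w,x]. Suppose that ℓ⁴ divides A_t and ℓ⁶ divides B_t in ℂ[w,x]. Then there exist a, b ∈ ℂ such that c = −b/7, A_t = a·ℓ⁴·w⁴, and B_t = ℓ⁶·(ℓ + b·w⁶); moreover the discriminant satisfies the factorization 4·A_t³ + 27·B_t² = ℓ¹²·(4a³·w¹² + 27·(ℓ + b·w⁶)²). -/
open MvPolynomial

/-- For `t = (t₄,t₁₀,t₁₂,t₁₆,t₁₈,t₂₂,t₂₄,t₂₈,t₃₀,t₃₆,t₄₂) ∈ ℂ¹¹` (indexed here by `Fin 11`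
in this order), the coefficient polynomial
`A_t = t₄x⁴w⁴ + t₁₀x³w¹⁰ + t₁₆x²w¹⁶ + t₂₂xw²² + t₂₈w²⁸ ∈ ℂ[w,x]`,
with `w = X 0` and `x = X 1`. -/
noncomputable def At (t : Fin 11 → ℂ) : MvPolynomial (Fin 2) ℂ :=
  C (t 0) * X 1 ^ 4 * X 0 ^ 4 + C (t 1) * X 1 ^ 3 * X 0 ^ 10 +
  C (t 3) * X 1 ^ 2 * X 0 ^ 16 + C (t 5) * X 1 * X 0 ^ 22 + C (t 7) * X 0 ^ 28

/-- The coefficient polynomial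
`B_t = x⁷ + t₁₂x⁵w¹² + t₁₈x⁴w¹⁸ + t₂₄x³w²⁴ + t₃₀x²w³⁰ + t₃₆xw³⁶ + t₄₂w⁴² ∈ ℂ[w,x]`. -/
noncomputable def Bt (t : Fin 11 → ℂ) : MvPolynomial (Fin 2) ℂ :=
  X 1 ^ 7 + C (t 2) * X 1 ^ 5 * X 0 ^ 12 + C (t 4) * X 1 ^ 4 * X 0 ^ 18 +
  C (t 6) * X 1 ^ 3 * X 0 ^ 24 + C (t 8) * X 1 ^ 2 * X 0 ^ 30 +
  C (t 9) * X 1 * X 0 ^ 36 + C (t 10) * X 0 ^ 42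

/-!
Rewrite `A_t` and `B_t` in the basis `ℓ^i w^j` with `ℓ = x + c w⁶`. Setting `w = 1` and
`x = X - c` sends `ℓ` to `X` and each such monomial to `X^i`, so `ℓ^n ∣ P` forces the
coefficients of `ℓ^i`, `i < n`, to vanish. What survives is `t₄ ℓ⁴ w⁴` for `A_t` and
`ℓ⁶ (ℓ - 7c w⁶)` for `B_t`.
-/

namespace Polynomial

theorem coeff_eq_zero_of_X_pow_dvd_sum_add {R : Type*} [Semiring R] {n : ℕ} (α : Fin n → R)
    (g : R[X]) (h : X ^ n ∣ ∑ i, C (α i) * X ^ (i : ℕ) + X ^ n * g) (i : Fin n) : α i = 0 := by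
  have hi := X_pow_dvd_iff.mp h i i.isLt
  rw [coeff_add, coeff_X_pow_mul', if_neg (not_le.mpr i.isLt), add_zero, finsetSum_coeff] at hi
  simpa [coeff_C_mul_X_pow, Fin.val_inj] using hi

end Polynomial

section Line

variable {R : Type*} [CommRing R]

noncomputable def weightedLine (c : R) : MvPolynomial (Fin 2) R := X 1 + C c * X 0 ^ 6

noncomputable def dehomLine (c : R) : MvPolynomial (Fin 2) R →ₐ[R] Polynomial R :=
  aeval ![1, Polynomial.X - Polynomial.C c]

@[simp]
theorem dehomLine_X_zero (c : R) : dehomLine c (X 0) = 1 := by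
  simp [dehomLine]

@[simp]
theorem dehomLine_weightedLine (c : R) : dehomLine c (weightedLine c) = Polynomial.X := by
  simp [dehomLine, weightedLine, Polynomial.algebraMap_eq]

theorem coeff_eq_zero_of_weightedLine_pow_dvd {n : ℕ} (c : R) (α : Fin n → R) (e : Fin n → ℕ)
    (g : MvPolynomial (Fin 2) R)
    (h : weightedLine c ^ n ∣
      ∑ i, C (α i) * weightedLine c ^ (i : ℕ) * X 0 ^ e i + weightedLine c ^ n * g)
    (i : Fin n) : α i = 0 := by
  refine Polynomial.coeff_eq_zero_of_X_pow_dvd_sum_add α (dehomLine c g) ?_ i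
  simpa [Polynomial.algebraMap_eq] using map_dvd (dehomLine c) h

theorem eq_weightedLine_pow_mul_of_dvd {n : ℕ} {c : R} {α : Fin n → R} {e : Fin n → ℕ}
    {P g : MvPolynomial (Fin 2) R}
    (hP : P = ∑ i, C (α i) * weightedLine c ^ (i : ℕ) * X 0 ^ e i + weightedLine c ^ n * g)
    (h : weightedLine c ^ n ∣ P) : P = weightedLine c ^ n * g := by
  have hα := coeff_eq_zero_of_weightedLine_pow_dvd c α e g (hP ▸ h)
  simp [hP, hα]

end Line

theorem At_eq_weightedLine_expansion (t : Fin 11 → ℂ) (c : ℂ) :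
    At t = ∑ i, C (![t 0 * c ^ 4 - t 1 * c ^ 3 + t 3 * c ^ 2 - t 5 * c + t 7,
        -4 * t 0 * c ^ 3 + 3 * t 1 * c ^ 2 - 2 * t 3 * c + t 5,
        6 * t 0 * c ^ 2 - 3 * t 1 * c + t 3,
        -4 * t 0 * c + t 1] i) * weightedLine c ^ (i : ℕ) * X 0 ^ (![28, 22, 16, 10] i) +
      weightedLine c ^ 4 * (C (t 0) * X 0 ^ 4) := by
  simp only [At, weightedLine, Fin.sum_univ_succ, Fin.sum_univ_zero, Fin.val_zero, Fin.val_succ,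
    Matrix.cons_val_zero, Matrix.cons_val_succ, map_add, map_sub, map_mul, map_pow,
    map_neg, map_ofNat]
  ring

theorem Bt_eq_weightedLine_expansion (t : Fin 11 → ℂ) (c : ℂ) :
    Bt t = ∑ i, C (![-c ^ 7 - t 2 * c ^ 5 + t 4 * c ^ 4 - t 6 * c ^ 3 + t 8 * c ^ 2 - t 9 * c + t 10,
        7 * c ^ 6 + 5 * t 2 * c ^ 4 - 4 * t 4 * c ^ 3 + 3 * t 6 * c ^ 2 - 2 * t 8 * c + t 9,
        -21 * c ^ 5 - 10 * t 2 * c ^ 3 + 6 * t 4 * c ^ 2 - 3 * t 6 * c + t 8,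
        35 * c ^ 4 + 10 * t 2 * c ^ 2 - 4 * t 4 * c + t 6,
        -35 * c ^ 3 - 5 * t 2 * c + t 4,
        21 * c ^ 2 + t 2] i) * weightedLine c ^ (i : ℕ) * X 0 ^ (![42, 36, 30, 24, 18, 12] i) +
      weightedLine c ^ 6 * (weightedLine c + C (-7 * c) * X 0 ^ 6) := by
  simp only [Bt, weightedLine, Fin.sum_univ_succ, Fin.sum_univ_zero, Fin.val_zero, Fin.val_succ,
    Matrix.cons_val_zero, Matrix.cons_val_succ, map_add, map_sub, map_mul, map_pow,
    map_neg, map_ofNat]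
  ring

/-- If `ℓ = x + c·w⁶` satisfies `ℓ⁴ ∣ A_t` and `ℓ⁶ ∣ B_t`, then `c = -b/7`,
`A_t = a·ℓ⁴·w⁴` and `B_t = ℓ⁶·(ℓ + b·w⁶)` for some `a, b ∈ ℂ`, and the discriminant
factors as `4A_t³ + 27B_t² = ℓ¹²·(4a³w¹² + 27(ℓ + bw⁶)²)`. -/
theorem statement13 (t : Fin 11 → ℂ) (c : ℂ) (l : MvPolynomial (Fin 2) ℂ)
    (hl : l = X 1 + C c * X 0 ^ 6)
    (hA : l ^ 4 ∣ At t) (hB : l ^ 6 ∣ Bt t) :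
    ∃ a b : ℂ, c = -b / 7 ∧
      At t = C a * l ^ 4 * X 0 ^ 4 ∧
      Bt t = l ^ 6 * (l + C b * X 0 ^ 6) ∧
      4 * At t ^ 3 + 27 * Bt t ^ 2 =
        l ^ 12 * (4 * C a ^ 3 * X 0 ^ 12 + 27 * (l + C b * X 0 ^ 6) ^ 2) := by
  change l = weightedLine c at hl
  subst hl
  have hAt := eq_weightedLine_pow_mul_of_dvd (At_eq_weightedLine_expansion t c) hA
  have hBt := eq_weightedLine_pow_mul_of_dvd (Bt_eq_weightedLine_expansion t c) hB
  refine ⟨t 0, -7 * c, by ring, by rw [hAt]; ring, hBt, ?_⟩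
  rw [hAt, hBt]
  ring
end
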